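/- Every 5-point best-packing configuration on S² (Euclidean metric) consists of two antipodal points and three points on the great circle (equator) orthogonal to them, such that the equatorial triangle has all central angles at least π/2 between consecutive points (equivalently, all pairwise equatorial distances at least √2). -/

import Mathlib

/-!
The octahedron minus one vertex shows that the packing distance is at least `√2`, so in a best
packing the five unit vectors pairwise make nonpositive inner products. In such an obtuse family a
positive linear relation splits off orthogonally from the remaining vectors; in dimension three
this forces two of the five vectors to be antipodal, `p` and `-p`. Every other vector `y` then
satisfies `⟪p, y⟫ ≤ 0` and `⟪-p, y⟫ ≤ 0`, so it lies on the equator orthogonal to `p`.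
-/

open scoped BigOperators
open Filter Metric

/-- Separation distance of an `N`-point configuration. -/
noncomputable def sep {E : Type*} [MetricSpace E] {N : ℕ} (x : Fin N → E) : ℝ :=
  ⨅ p : {p : Fin N × Fin N // p.1 ≠ p.2}, dist (x p.1.1) (x p.1.2)

/-- Mesh norm (covering radius) of a configuration relative to a set `S`. -/
noncomputable def mesh {E : Type*} [MetricSpace E] {N : ℕ} (S : Set E) (x : Fin N → E) : ℝ :=
  ⨆ y : S, ⨅ i, dist (y : E) (x i)

/-- `N`-point best-packing distance of the set `S`. -/
noncomputable def packDist {E : Type*} [MetricSpace E] (S : Set E) (N : ℕ) : ℝ :=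
  ⨆ x : {x : Fin N → E // Function.Injective x ∧ ∀ i, x i ∈ S}, sep x.1

/-- Riesz `s`-energy of a configuration. -/
noncomputable def energy {E : Type*} [MetricSpace E] {N : ℕ} (s : ℝ) (x : Fin N → E) : ℝ :=
  ∑ i, ∑ j ∈ Finset.univ.filter (· ≠ i), dist (x i) (x j) ^ (-s)

/-- Minimal `N`-point Riesz `s`-energy of the set `S`. -/
noncomputable def minEnergy {E : Type*} [MetricSpace E] (S : Set E) (N : ℕ) (s : ℝ) : ℝ :=
  ⨅ x : {x : Fin N → E // Function.Injective x ∧ ∀ i, x i ∈ S}, energy s x.1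

open scoped RealInnerProductSpace
open Finset Module Submodule

section Obtuse

variable {ι E : Type*} [NormedAddCommGroup E] [InnerProductSpace ℝ E] {v : ι → E}

lemma inner_eq_zero_of_sum_smul_eq_zero (hv : Pairwise fun i j => ⟪v i, v j⟫ ≤ 0)
    {P : Finset ι} {c : ι → ℝ} (hpos : ∀ i ∈ P, 0 < c i) (hP : ∑ i ∈ P, c i • v i = 0)
    {i k : ι} (hi : i ∈ P) (hk : k ∉ P) : ⟪v i, v k⟫ = 0 := by
  have hsum : ∑ j ∈ P, c j * ⟪v j, v k⟫ = 0 := by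
    simpa only [sum_inner, real_inner_smul_left, inner_zero_left] using congrArg (⟪·, v k⟫) hP
  have hterm : ∀ j ∈ P, c j * ⟪v j, v k⟫ ≤ 0 := fun j hj =>
    mul_nonpos_of_nonneg_of_nonpos (hpos j hj).le (hv fun h => hk (h ▸ hj))
  exact (mul_eq_zero.1 ((sum_eq_zero_iff_of_nonpos hterm).1 hsum i hi)).resolve_left
    (hpos i hi).ne'

lemma sum_filter_pos_smul_eq_zero [Fintype ι] (hv : Pairwise fun i j => ⟪v i, v j⟫ ≤ 0)
    {c : ι → ℝ} (hc : ∑ i, c i • v i = 0) : ∑ i ∈ univ.filter (0 < c ·), c i • v i = 0 := by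
  set u := ∑ i ∈ univ.filter (0 < c ·), c i • v i
  have hu : u = -∑ j ∈ univ.filter (¬ 0 < c ·), c j • v j := by
    rw [eq_neg_iff_add_eq_zero, sum_filter_add_sum_filter_not, hc]
  -- `u` is both a positive and a nonpositive combination, so `⟪u, u⟫ ≤ 0`.
  have huu : ⟪u, u⟫ ≤ 0 := by
    nth_rewrite 2 [hu]
    rw [inner_neg_right, sum_inner, neg_nonpos]
    refine sum_nonneg fun i hi => ?_
    rw [inner_sum]
    refine sum_nonneg fun j hj => ?_
    simp only [mem_filter, mem_univ, true_and] at hi hj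
    have hij : i ≠ j := fun h => hj (h ▸ hi)
    rw [real_inner_smul_left, real_inner_smul_right]
    exact mul_nonneg hi.le (mul_nonneg_of_nonpos_of_nonpos (not_lt.1 hj) (hv hij))
  exact real_inner_self_nonpos.1 huu

end Obtuse

section Antipodal

variable {E : Type*} [NormedAddCommGroup E] [InnerProductSpace ℝ E]

lemma eq_neg_of_mem_span_singleton {u w : E} (hu : ‖u‖ = 1) (hw : ‖w‖ = 1) (huw : ⟪u, w⟫ ≤ 0)
    (h : w ∈ ℝ ∙ u) : w = -u := by
  obtain ⟨r, rfl⟩ := mem_span_singleton.1 h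
  have habs : |r| = 1 := by simpa [norm_smul, hu] using hw
  have hr : r ≤ 0 := by simpa [real_inner_smul_right, real_inner_self_eq_norm_sq, hu] using huw
  rw [abs_of_nonpos hr] at habs
  rw [show r = -1 by linarith, neg_one_smul]

variable [FiniteDimensional ℝ E]

lemma eq_neg_of_mem_of_finrank_le_one {W : Submodule ℝ E} (hW : finrank ℝ W ≤ 1) {u w : E}
    (huW : u ∈ W) (hwW : w ∈ W) (hu : ‖u‖ = 1) (hw : ‖w‖ = 1) (huw : ⟪u, w⟫ ≤ 0) : w = -u := by
  have hu0 : u ≠ 0 := by rintro rfl; simp at hu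
  have hspan : (ℝ ∙ u) = W := eq_of_le_of_finrank_le ((span_singleton_le_iff_mem u W).2 huW)
    (hW.trans (finrank_span_singleton hu0).ge)
  exact eq_neg_of_mem_span_singleton hu hw huw (hspan ▸ hwW)

variable {ι : Type*} [Fintype ι] {v : ι → E}

lemma exists_sum_smul_eq_zero_of_finrank_lt (W : Submodule ℝ E) {s : Finset ι}
    (hs : ∀ i ∈ s, v i ∈ W) (hW : finrank ℝ W < s.card) :
    ∃ c : ι → ℝ, ∑ i, c i • v i = 0 ∧ (∀ i ∉ s, c i = 0) ∧ ∃ i, 0 < c i := by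
  classical
  have hdep : ¬ LinearIndepOn ℝ v s := fun h => by
    have := (LinearIndependent.of_comp W.subtype
      (v := fun i : s => (⟨v i, hs i i.2⟩ : W)) h).fintype_card_le_finrank
    simp only [Fintype.card_coe] at this
    omega
  obtain ⟨f, hf, i₀, hi₀, hfi₀⟩ := not_linearIndepOn_finset_iff.1 hdep
  refine ⟨fun i => if i ∈ s then f i₀ * f i else 0, ?_, fun i hi => if_neg hi, i₀, ?_⟩
  · simp only [ite_smul, zero_smul, sum_ite_mem, univ_inter, mul_smul, ← smul_sum, hf,
      smul_zero]
  · simpa only [if_pos hi₀] using mul_self_pos.2 hfi₀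

lemma exists_eq_neg_of_sum_smul_eq_zero (hE : finrank ℝ E ≤ 3) (hunit : ∀ i, ‖v i‖ = 1)
    (hv : Pairwise fun i j => ⟪v i, v j⟫ ≤ 0) {c : ι → ℝ} (hc : ∑ i, c i • v i = 0)
    (hpos : ∃ i, 0 < c i) {k l : ι} (hkl : k ≠ l) (hk : ¬ 0 < c k) (hl : ¬ 0 < c l) :
    ∃ i j, i ≠ j ∧ v j = -v i := by
  classical
  set P := univ.filter (0 < c ·)
  have hcP : ∀ i ∈ P, 0 < c i := fun i hi => (mem_filter.1 hi).2
  have hP := sum_filter_pos_smul_eq_zero hv hc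
  have horth : ∀ {i m}, i ∈ P → ¬ 0 < c m → ⟪v i, v m⟫ = 0 := fun hi hm =>
    inner_eq_zero_of_sum_smul_eq_zero hv hcP hP hi (by simpa [P] using hm)
  obtain ⟨a, ha⟩ := hpos
  replace ha : a ∈ P := by simpa [P] using ha
  obtain ⟨b, hb, hba⟩ : ∃ b ∈ P, b ≠ a := by
    by_contra! h
    rw [sum_eq_single_of_mem a ha fun b hb hba => absurd (h b hb) hba] at hP
    have hva : v a = 0 := (smul_eq_zero.1 hP).resolve_left (hcP a ha).ne'
    simpa [hva] using hunit a
  set K := (ℝ ∙ v a) ⊔ (ℝ ∙ v b)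
  rcases le_or_gt (finrank ℝ K) 1 with hK | hK
  · exact ⟨a, b, hba.symm, eq_neg_of_mem_of_finrank_le_one hK
      (mem_sup_left (mem_span_singleton_self _)) (mem_sup_right (mem_span_singleton_self _))
      (hunit a) (hunit b) (hv hba.symm)⟩
  · have hKperp : finrank ℝ Kᗮ ≤ 1 := by
      have := K.finrank_add_finrank_orthogonal
      omega
    have hmem : ∀ {m}, ¬ 0 < c m → v m ∈ Kᗮ := fun hm => by
      rw [← inf_orthogonal, Submodule.mem_inf, mem_orthogonal_singleton_iff_inner_right,
        mem_orthogonal_singleton_iff_inner_right]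
      exact ⟨horth ha hm, horth hb hm⟩
    exact ⟨k, l, hkl, eq_neg_of_mem_of_finrank_le_one hKperp (hmem hk) (hmem hl)
      (hunit k) (hunit l) (hv hkl)⟩

end Antipodal

-- A relation among `v 0, …, v 3` either already forces an antipodal pair, or makes `v 0, …, v 3`
-- orthogonal to `v 4`, and then a relation among `v 0, v 1, v 2` in that plane does.
theorem exists_eq_neg_of_pairwise_inner_nonpos {E : Type*} [NormedAddCommGroup E]
    [InnerProductSpace ℝ E] [FiniteDimensional ℝ E] (hE : finrank ℝ E ≤ 3) {v : Fin 5 → E}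
    (hunit : ∀ i, ‖v i‖ = 1) (hv : Pairwise fun i j => ⟪v i, v j⟫ ≤ 0) :
    ∃ i j, i ≠ j ∧ v j = -v i := by
  obtain ⟨c, hc, hcs, hpos⟩ := exists_sum_smul_eq_zero_of_finrank_lt (v := v) ⊤
    (s := {0, 1, 2, 3}) (fun _ _ => mem_top)
    (by rw [finrank_top]; exact hE.trans_lt (by decide))
  have h4 : ¬ 0 < c 4 := by simp [hcs 4 (by decide)]
  by_cases hP : ∃ k, k ≠ 4 ∧ ¬ 0 < c k
  · obtain ⟨k, hk4, hk⟩ := hP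
    exact exists_eq_neg_of_sum_smul_eq_zero hE hunit hv hc hpos hk4 hk h4
  push Not at hP
  have hW : ∀ i ∈ ({0, 1, 2} : Finset (Fin 5)), v i ∈ (ℝ ∙ v 4)ᗮ := fun i hi => by
    rw [mem_orthogonal_singleton_iff_inner_left]
    refine inner_eq_zero_of_sum_smul_eq_zero hv (fun i hi => (mem_filter.1 hi).2)
      (sum_filter_pos_smul_eq_zero hv hc) ?_ (by simpa using h4)
    simpa using hP i (by fin_cases hi <;> decide)
  have hrank : finrank ℝ (ℝ ∙ v 4)ᗮ < ({0, 1, 2} : Finset (Fin 5)).card := by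
    have h1 := (ℝ ∙ v 4).finrank_add_finrank_orthogonal
    rw [finrank_span_singleton (by rintro h; simpa [h] using hunit 4)] at h1
    change _ < 3
    omega
  obtain ⟨c', hc', hc's, hpos'⟩ := exists_sum_smul_eq_zero_of_finrank_lt _ hW hrank
  exact exists_eq_neg_of_sum_smul_eq_zero hE hunit hv hc' hpos' (by decide : (3 : Fin 5) ≠ 4)
    (by simp [hc's 3 (by decide)]) (by simp [hc's 4 (by decide)])

section Packing

variable {X : Type*} [MetricSpace X] {N : ℕ}

lemma sep_le_dist (x : Fin N → X) {i j : Fin N} (hij : i ≠ j) : sep x ≤ dist (x i) (x j) :=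
  ciInf_le (f := fun p : {p : Fin N × Fin N // p.1 ≠ p.2} => dist (x p.1.1) (x p.1.2))
    ⟨0, by rintro _ ⟨p, rfl⟩; exact dist_nonneg⟩ ⟨(i, j), hij⟩

lemma le_sep (hN : 1 < N) {x : Fin N → X} {r : ℝ} (h : ∀ i j, i ≠ j → r ≤ dist (x i) (x j)) :
    r ≤ sep x :=
  have : Nonempty {p : Fin N × Fin N // p.1 ≠ p.2} :=
    ⟨⟨(⟨0, by omega⟩, ⟨1, hN⟩), by simp [Fin.ext_iff]⟩⟩
  le_ciInf fun p => h _ _ p.2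

lemma sep_le_diam {S : Set X} (hS : Bornology.IsBounded S) {x : Fin N → X} (hx : ∀ i, x i ∈ S) :
    sep x ≤ diam S := by
  rcases isEmpty_or_nonempty {p : Fin N × Fin N // p.1 ≠ p.2} with h | ⟨⟨p, hp⟩⟩
  · rw [sep, Real.iInf_of_isEmpty]
    exact diam_nonneg
  · exact (sep_le_dist x hp).trans (dist_le_diam_of_mem hS (hx _) (hx _))

lemma sep_le_packDist {S : Set X} (hS : Bornology.IsBounded S) {x : Fin N → X}
    (hx : Function.Injective x) (hxS : ∀ i, x i ∈ S) : sep x ≤ packDist S N :=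
  le_ciSup (f := fun y : {y : Fin N → X // Function.Injective y ∧ ∀ i, y i ∈ S} => sep y.1)
    ⟨diam S, by rintro _ ⟨y, rfl⟩; exact sep_le_diam hS y.2.2⟩ ⟨x, hx, hxS⟩

end Packing

lemma sqrt_two_le_dist_iff_inner_nonpos {E : Type*} [NormedAddCommGroup E]
    [InnerProductSpace ℝ E] {u w : E} (hu : ‖u‖ = 1) (hw : ‖w‖ = 1) :
    √2 ≤ dist u w ↔ ⟪u, w⟫ ≤ 0 := by
  rw [Real.sqrt_le_left dist_nonneg, dist_eq_norm, norm_sub_sq_real, hu, hw]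
  constructor <;> intro h <;> linarith

noncomputable def octahedronMinusVertex : Fin 5 → EuclideanSpace ℝ (Fin 3) :=
  ![EuclideanSpace.single 0 1, EuclideanSpace.single 1 1, -EuclideanSpace.single 0 1,
    EuclideanSpace.single 2 1, -EuclideanSpace.single 2 1]

lemma norm_octahedronMinusVertex (i : Fin 5) : ‖octahedronMinusVertex i‖ = 1 := by
  fin_cases i <;> simp [octahedronMinusVertex]

lemma pairwise_inner_octahedronMinusVertex_nonpos :
    Pairwise fun i j => ⟪octahedronMinusVertex i, octahedronMinusVertex j⟫ ≤ 0 := by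
  intro i j hij
  fin_cases i <;> fin_cases j <;>
    simp_all [octahedronMinusVertex, EuclideanSpace.inner_single_left]

lemma sqrt_two_le_packDist_sphere :
    √2 ≤ packDist (sphere (0 : EuclideanSpace ℝ (Fin 3)) 1) 5 := by
  have hdist : ∀ i j, i ≠ j → √2 ≤ dist (octahedronMinusVertex i) (octahedronMinusVertex j) :=
    fun i j hij => (sqrt_two_le_dist_iff_inner_nonpos (norm_octahedronMinusVertex i)
      (norm_octahedronMinusVertex j)).2 (pairwise_inner_octahedronMinusVertex_nonpos hij)
  have hinj : Function.Injective octahedronMinusVertex := fun i j h => by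
    by_contra hij
    have := hdist i j hij
    rw [h, dist_self] at this
    exact absurd this (not_le.2 (by positivity))
  exact (le_sep (by norm_num) hdist).trans (sep_le_packDist isBounded_sphere hinj
    fun i => mem_sphere_zero_iff_norm.2 (norm_octahedronMinusVertex i))

theorem stmt_10_general (x : Fin 5 → EuclideanSpace ℝ (Fin 3))
    (hS : ∀ i, x i ∈ Metric.sphere (0 : EuclideanSpace ℝ (Fin 3)) 1)
    (hbest : sep x = packDist (Metric.sphere (0 : EuclideanSpace ℝ (Fin 3)) 1) 5) :
    ∃ i j : Fin 5, i ≠ j ∧ x j = -x i ∧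
      (∀ k, k ≠ i → k ≠ j → inner (𝕜 := ℝ) (x i) (x k) = 0) ∧
      (∀ k l, k ≠ l → k ≠ i → k ≠ j → l ≠ i → l ≠ j →
        Real.sqrt 2 ≤ dist (x k) (x l)) := by
  have hunit : ∀ i, ‖x i‖ = 1 := fun i => mem_sphere_zero_iff_norm.1 (hS i)
  have hdist : ∀ i j, i ≠ j → √2 ≤ dist (x i) (x j) := fun i j hij =>
    sqrt_two_le_packDist_sphere.trans (hbest ▸ sep_le_dist x hij)
  have hobtuse : Pairwise fun i j => ⟪x i, x j⟫ ≤ 0 := fun i j hij =>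
    (sqrt_two_le_dist_iff_inner_nonpos (hunit i) (hunit j)).1 (hdist i j hij)
  obtain ⟨i, j, hij, hji⟩ := exists_eq_neg_of_pairwise_inner_nonpos
    (finrank_euclideanSpace_fin.le) hunit hobtuse
  refine ⟨i, j, hij, hji, fun k hki hkj => ?_, fun k l hkl _ _ _ _ => hdist k l hkl⟩
  have hik : ⟪x i, x k⟫ ≤ 0 := hobtuse hki.symm
  have hjk : ⟪x j, x k⟫ ≤ 0 := hobtuse hkj.symm
  rw [hji, inner_neg_left] at hjk
  exact le_antisymm hik (neg_nonpos.1 hjk)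

theorem stmt_10 (x : Fin 5 → EuclideanSpace ℝ (Fin 3))
    (hx : Function.Injective x)
    (hS : ∀ i, x i ∈ Metric.sphere (0 : EuclideanSpace ℝ (Fin 3)) 1)
    (hbest : sep x = packDist (Metric.sphere (0 : EuclideanSpace ℝ (Fin 3)) 1) 5) :
    ∃ i j : Fin 5, i ≠ j ∧ x j = -x i ∧
      (∀ k, k ≠ i → k ≠ j → inner (𝕜 := ℝ) (x i) (x k) = 0) ∧
      (∀ k l, k ≠ l → k ≠ i → k ≠ j → l ≠ i → l ≠ j →
        Real.sqrt 2 ≤ dist (x k) (x l)) :=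
  stmt_10_general x hS hbest
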